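/- For every λ ≥ 1, ε > 0, and every (λ,ε)-quasi-geodesic ray γ : [0,∞) → ℍ, viewing ℍ as a subset of the Riemann sphere ℂ ∪ {∞}, the limit lim_{t→∞} γ(t) exists in ℂ ∪ {∞} and belongs to ℝ ∪ {∞} (the boundary circle at infinity of ℍ). -/

import Mathlib

open UpperHalfPlane Set Filter

/-- A map `γ` is a `(λ, ε)`-quasi-geodesic on the set `I`. -/
def IsQuasiGeodesicOn {X : Type*} [MetricSpace X] (lam eps : ℝ) (γ : ℝ → X) (I : Set ℝ) : Prop :=
  ∀ s ∈ I, ∀ t ∈ I,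
    lam⁻¹ * |s - t| - eps ≤ dist (γ s) (γ t) ∧ dist (γ s) (γ t) ≤ lam * |s - t| + eps

section Aux
open Real Topology


noncomputable def QQ (x y : ℍ) : ℝ := 2 * Real.cosh (dist x y)
noncomputable def rho (x y : ℍ) : ℝ := dist (x:ℂ) y / (Real.sqrt x.im * Real.sqrt y.im)

lemma QQ_eq (x y : ℍ) : QQ x y = 2 + dist (x:ℂ) y ^ 2 / (x.im * y.im) := by
  rw [QQ, cosh_dist]; field_simp

lemma two_le_QQ (x y : ℍ) : 2 ≤ QQ x y := by
  have := Real.one_le_cosh (dist x y); unfold QQ; linarith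

lemma QQ_pos (x y : ℍ) : 0 < QQ x y := lt_of_lt_of_le (by norm_num) (two_le_QQ x y)

lemma exp_le_QQ (x y : ℍ) : Real.exp (dist x y) ≤ QQ x y := by
  unfold QQ; rw [Real.cosh_eq]
  have := Real.exp_pos (-(dist x y)); linarith

lemma QQ_le_two_exp (x y : ℍ) : QQ x y ≤ 2 * Real.exp (dist x y) := by
  unfold QQ; rw [Real.cosh_eq]
  have h1 := Real.exp_pos (-(dist x y))
  have h2 : Real.exp (-(dist x y)) ≤ Real.exp (dist x y) := by
    apply Real.exp_le_exp.2; have : (0:ℝ) ≤ dist x y := dist_nonneg; linarith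
  linarith

lemma QQ_symm (x y : ℍ) : QQ x y = QQ y x := by rw [QQ, dist_comm, QQ]

lemma QQ_triangle (x y z : ℍ) : QQ x z ≤ 2 * (QQ x y * QQ y z) := by
  calc QQ x z ≤ 2 * Real.exp (dist x z) := QQ_le_two_exp x z
    _ ≤ 2 * Real.exp (dist x y + dist y z) := by
        have := dist_triangle x y z; gcongr
    _ = 2 * (Real.exp (dist x y) * Real.exp (dist y z)) := by rw [Real.exp_add]
    _ ≤ 2 * (QQ x y * QQ y z) := by
        have := mul_le_mul (exp_le_QQ x y) (exp_le_QQ y z) (Real.exp_pos _).le (QQ_pos x y).le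
        linarith

lemma rho_nonneg (x y : ℍ) : 0 ≤ rho x y := by
  apply div_nonneg dist_nonneg; positivity

lemma rho_sq (x y : ℍ) : rho x y ^ 2 = QQ x y - 2 := by
  rw [QQ_eq, rho, div_pow, mul_pow, Real.sq_sqrt x.im_pos.le, Real.sq_sqrt y.im_pos.le]
  ring

lemma rho_ptolemy (x y z w : ℍ) : rho x y * rho z w ≤ rho x z * rho y w + rho x w * rho y z := by
  have E : dist (x:ℂ) y * dist (z:ℂ) w ≤ dist (x:ℂ) z * dist (y:ℂ) w + dist (x:ℂ) w * dist (y:ℂ) z := by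
    have h := EuclideanGeometry.mul_dist_le_mul_dist_add_mul_dist (x:ℂ) z y w
    rw [dist_comm (z:ℂ) (y:ℂ)] at h
    ring_nf at h ⊢
    linarith
  have hD : (0:ℝ) < (Real.sqrt x.im * Real.sqrt y.im) * (Real.sqrt z.im * Real.sqrt w.im) := by
    have := x.im_pos; have := y.im_pos; have := z.im_pos; have := w.im_pos
    positivity
  unfold rho
  rw [div_mul_div_comm, div_mul_div_comm, div_mul_div_comm,
    show (Real.sqrt x.im * Real.sqrt z.im) * (Real.sqrt y.im * Real.sqrt w.im)
      = (Real.sqrt x.im * Real.sqrt y.im) * (Real.sqrt z.im * Real.sqrt w.im) by ring,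
    show (Real.sqrt x.im * Real.sqrt w.im) * (Real.sqrt y.im * Real.sqrt z.im)
      = (Real.sqrt x.im * Real.sqrt y.im) * (Real.sqrt z.im * Real.sqrt w.im) by ring,
    ← add_div]
  exact div_le_div_of_nonneg_right E hD.le

lemma QQ_key (o x y z : ℍ) :
    QQ x y * QQ o z ≤ 7 * (QQ x z * QQ o y + QQ o x * QQ z y) := by
  set A := QQ x z * QQ o y with hA
  set B := QQ o x * QQ z y with hB
  have hA4 : 4 ≤ A := by
    have := mul_le_mul (two_le_QQ x z) (two_le_QQ o y) (by norm_num) (QQ_pos x z).le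
    linarith
  have hApos : 0 < A := lt_of_lt_of_le (by norm_num) hA4
  have hBpos : 0 < B := mul_pos (QQ_pos o x) (QQ_pos z y)
  -- QQ x y ≤ A + B
  have h1 : QQ x y ≤ 2 * (QQ x z * QQ z y) := QQ_triangle x z y
  have h2 : QQ x y ≤ 2 * (QQ x o * QQ o y) := QQ_triangle x o y
  have h2' : QQ x y ≤ 2 * (QQ o x * QQ o y) := by rw [QQ_symm o x]; exact h2
  have hsq : QQ x y * QQ x y ≤ 4 * (A * B) := by
    have hP : (0:ℝ) ≤ 2 * (QQ x z * QQ z y) := by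
      have := mul_pos (QQ_pos x z) (QQ_pos z y); linarith
    have := mul_le_mul h1 h2' (QQ_pos x y).le hP
    calc QQ x y * QQ x y ≤ 2 * (QQ x z * QQ z y) * (2 * (QQ o x * QQ o y)) := this
      _ = 4 * (A * B) := by rw [hA, hB]; ring
  have hxyAB : QQ x y ≤ A + B := by
    nlinarith [sq_nonneg (A - B), QQ_pos x y, hApos, hBpos]
  -- QQ o z ≤ A + B
  have g1 : QQ o z ≤ 2 * (QQ o x * QQ x z) := QQ_triangle o x z
  have g2 : QQ o z ≤ 2 * (QQ o y * QQ y z) := QQ_triangle o y z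
  have g2' : QQ o z ≤ 2 * (QQ o y * QQ z y) := by rw [QQ_symm z y]; exact g2
  have gsq : QQ o z * QQ o z ≤ 4 * (A * B) := by
    have hP : (0:ℝ) ≤ 2 * (QQ o x * QQ x z) := by
      have := mul_pos (QQ_pos o x) (QQ_pos x z); linarith
    have := mul_le_mul g1 g2' (QQ_pos o z).le hP
    calc QQ o z * QQ o z ≤ 2 * (QQ o x * QQ x z) * (2 * (QQ o y * QQ z y)) := this
      _ = 4 * (A * B) := by rw [hA, hB]; ring
  have hozAB : QQ o z ≤ A + B := by
    nlinarith [sq_nonneg (A - B), QQ_pos o z, hApos, hBpos]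
  -- Ptolemy term
  have hpt : rho x y * rho o z ≤ rho x o * rho y z + rho x z * rho y o := rho_ptolemy x y o z
  have hc2 : (rho x o * rho y z) ^ 2 ≤ B := by
    rw [mul_pow, hB]
    have e1 : rho x o ^ 2 ≤ QQ o x := by rw [rho_sq, QQ_symm x o]; linarith [two_le_QQ o x]
    have e2 : rho y z ^ 2 ≤ QQ z y := by rw [rho_sq, QQ_symm y z]; linarith [two_le_QQ z y]
    exact mul_le_mul e1 e2 (sq_nonneg _) (QQ_pos o x).le
  have hd2 : (rho x z * rho y o) ^ 2 ≤ A := by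
    rw [mul_pow, hA]
    have e1 : rho x z ^ 2 ≤ QQ x z := by rw [rho_sq]; linarith [two_le_QQ x z]
    have e2 : rho y o ^ 2 ≤ QQ o y := by rw [rho_sq, QQ_symm y o]; linarith [two_le_QQ o y]
    exact mul_le_mul e1 e2 (sq_nonneg _) (QQ_pos x z).le
  have hab2 : (rho x y * rho o z) ^ 2 ≤ 2 * A + 2 * B := by
    have h0 : (0:ℝ) ≤ rho x y * rho o z := mul_nonneg (rho_nonneg _ _) (rho_nonneg _ _)
    have hsum : (rho x y * rho o z) ^ 2 ≤ (rho x o * rho y z + rho x z * rho y o) ^ 2 := by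
      apply pow_le_pow_left₀ h0 hpt
    nlinarith [sq_nonneg (rho x o * rho y z - rho x z * rho y o)]
  -- assemble
  have Exy : QQ x y = rho x y ^ 2 + 2 := by rw [rho_sq]; ring
  have Eoz : QQ o z = rho o z ^ 2 + 2 := by rw [rho_sq]; ring
  rw [Exy, Eoz]
  have expand : (rho x y ^ 2 + 2) * (rho o z ^ 2 + 2)
      = (rho x y * rho o z) ^ 2 + 2 * rho x y ^ 2 + 2 * rho o z ^ 2 + 4 := by ring
  rw [expand]
  have t1 : 2 * rho x y ^ 2 ≤ 2 * (A + B) - 4 := by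
    have := hxyAB; rw [Exy] at this; linarith
  have t2 : 2 * rho o z ^ 2 ≤ 2 * (A + B) - 4 := by
    have := hozAB; rw [Eoz] at this; linarith
  linarith

noncomputable def gp (o x y : ℍ) : ℝ := (dist o x + dist o y - dist x y) / 2

lemma gp_ineq (o x y z : ℍ) :
    min (gp o x z) (gp o z y) - Real.log 112 / 2 ≤ gp o x y := by
  have S' : Real.exp (dist x y + dist o z)
      ≤ 28 * (Real.exp (dist x z + dist o y) + Real.exp (dist o x + dist z y)) := by
    have key := QQ_key o x y z
    have b1 : Real.exp (dist x y + dist o z) ≤ QQ x y * QQ o z := by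
      rw [Real.exp_add]
      exact mul_le_mul (exp_le_QQ x y) (exp_le_QQ o z) (Real.exp_pos _).le (QQ_pos x y).le
    have c1 : QQ x z * QQ o y ≤ 4 * Real.exp (dist x z + dist o y) := by
      rw [Real.exp_add]
      have h := mul_le_mul (QQ_le_two_exp x z) (QQ_le_two_exp o y) (QQ_pos o y).le
        (by positivity)
      linarith
    have c2 : QQ o x * QQ z y ≤ 4 * Real.exp (dist o x + dist z y) := by
      rw [Real.exp_add]
      have h := mul_le_mul (QQ_le_two_exp o x) (QQ_le_two_exp z y) (QQ_pos z y).le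
        (by positivity)
      linarith
    linarith
  have T : Real.exp (-(2 * gp o x y))
      ≤ 56 * (Real.exp (-(2 * gp o x z)) + Real.exp (-(2 * gp o z y))) := by
    have hpos := (Real.exp_pos (-(dist o x + dist o y + dist o z))).le
    have H := mul_le_mul_of_nonneg_right S' hpos
    calc Real.exp (-(2 * gp o x y))
        = Real.exp (dist x y + dist o z) * Real.exp (-(dist o x + dist o y + dist o z)) := by
          rw [← Real.exp_add]; congr 1; unfold gp; ring
      _ ≤ 28 * (Real.exp (dist x z + dist o y) + Real.exp (dist o x + dist z y))
            * Real.exp (-(dist o x + dist o y + dist o z)) := H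
      _ = 28 * (Real.exp (-(2 * gp o x z)) + Real.exp (-(2 * gp o z y))) := by
          rw [mul_assoc, add_mul, ← Real.exp_add, ← Real.exp_add]
          congr 3 <;> (unfold gp; ring)
      _ ≤ 56 * (Real.exp (-(2 * gp o x z)) + Real.exp (-(2 * gp o z y))) := by
          have := (Real.exp_pos (-(2 * gp o x z))).le
          have := (Real.exp_pos (-(2 * gp o z y))).le
          linarith
  have T2 : Real.exp (-(2 * gp o x y))
      ≤ 112 * Real.exp (-(2 * min (gp o x z) (gp o z y))) := by
    rcases le_total (gp o x z) (gp o z y) with h | h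
    · rw [min_eq_left h]
      have : Real.exp (-(2 * gp o z y)) ≤ Real.exp (-(2 * gp o x z)) := by
        apply Real.exp_le_exp.2; linarith
      linarith
    · rw [min_eq_right h]
      have : Real.exp (-(2 * gp o x z)) ≤ Real.exp (-(2 * gp o z y)) := by
        apply Real.exp_le_exp.2; linarith
      linarith
  have L := Real.log_le_log (Real.exp_pos _) T2
  rw [Real.log_exp, Real.log_mul (by norm_num) (Real.exp_ne_zero _), Real.log_exp] at L
  linarith

section QG
variable {lam eps : ℝ} {γ : ℝ → ℍ}
variable (hlam : 1 ≤ lam) (heps : 0 < eps) (hγ : IsQuasiGeodesicOn lam eps γ (Ici (0:ℝ)))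

local notation "δ" => Real.log 112 / 2
local notation "β" => lam⁻¹
local notation "α" => 1 / (2 * lam ^ 2)

lemma delta_pos : (0:ℝ) < δ := by
  have : (1:ℝ) < 112 := by norm_num
  have := Real.log_pos this
  linarith

include hlam heps hγ

lemma dist_lower {s t : ℝ} (hs : 0 ≤ s) (ht : 0 ≤ t) :
    lam⁻¹ * |s - t| - eps ≤ dist (γ s) (γ t) := (hγ s hs t ht).1

lemma dist_upper {s t : ℝ} (hs : 0 ≤ s) (ht : 0 ≤ t) :
    dist (γ s) (γ t) ≤ lam * |s - t| + eps := (hγ s hs t ht).2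

lemma step_bound {t t' : ℝ} (ht : 0 ≤ t) (h1 : t ≤ t') (h2 : t' ≤ (1 + α) * t) :
    3 / 4 * (β * t) - 3 / 2 * eps ≤ gp (γ 0) (γ t) (γ t') := by
  have hl0 : 0 < lam := lt_of_lt_of_le one_pos hlam
  have hβ : 0 < (β:ℝ) := inv_pos.2 hl0
  have ht' : 0 ≤ t' := le_trans ht h1
  have e1 : β * t - eps ≤ dist (γ 0) (γ t) := by
    have := dist_lower hlam heps hγ (le_refl (0:ℝ)) ht
    rwa [show |0 - t| = t by rw [abs_of_nonpos (by linarith)]; ring] at this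
  have e2 : β * t' - eps ≤ dist (γ 0) (γ t') := by
    have := dist_lower hlam heps hγ (le_refl (0:ℝ)) ht'
    rwa [show |0 - t'| = t' by rw [abs_of_nonpos (by linarith)]; ring] at this
  have e3 : dist (γ t) (γ t') ≤ β * t / 2 + eps := by
    have := dist_upper hlam heps hγ ht ht'
    have habs : |t - t'| = t' - t := by rw [abs_of_nonpos (by linarith)]; ring
    rw [habs] at this
    have hub : t' - t ≤ α * t := by nlinarith
    have : dist (γ t) (γ t') ≤ lam * (α * t) + eps := by nlinarith
    have hαβ : lam * (α * t) = β * t / 2 := by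
      field_simp
    linarith [this, hαβ.le]
  have e4 : β * t ≤ β * t' := by nlinarith
  unfold gp
  linarith

lemma chain_bound : ∀ n : ℕ, ∀ s, 4 * lam ^ 3 * δ + 1 ≤ s → ∀ t, s ≤ t →
    t ≤ s * (1 + α) ^ (n + 1) →
    β * s / 2 - 3 / 2 * eps ≤ gp (γ 0) (γ s) (γ t) := by
  have hl0 : 0 < lam := lt_of_lt_of_le one_pos hlam
  have hlne : lam ≠ 0 := ne_of_gt hl0
  have hβ : 0 < (β:ℝ) := inv_pos.2 hl0
  have hα : 0 < (α:ℝ) := by positivity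
  have hδ : 0 < (δ:ℝ) := delta_pos
  have hl3 : (0:ℝ) < lam ^ 3 := by positivity
  have hl2 : (1:ℝ) ≤ lam ^ 2 := by nlinarith
  have hβval : (β:ℝ) * lam = 1 := inv_mul_cancel₀ hlne
  have hαval : (α:ℝ) * (2 * lam ^ 2) = 1 := by field_simp
  intro n
  induction n with
  | zero =>
    intro s hs t hst htub
    have h9 : (0:ℝ) < 4 * lam ^ 3 * δ := mul_pos (by positivity) hδ
    have hs0 : 0 ≤ s := by linarith
    rw [pow_one, mul_comm] at htub
    have hb := step_bound hlam heps hγ hs0 hst htub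
    have hbs : 0 ≤ β * s := by positivity
    linarith
  | succ n ih =>
    intro s hs t hst htub
    have h9 : (0:ℝ) < 4 * lam ^ 3 * δ := mul_pos (by positivity) hδ
    have hs0 : (0:ℝ) ≤ s := by linarith
    have key1 : δ * (4 * lam) ≤ s := by nlinarith
    have key2 : δ * (4 * lam ^ 3) ≤ s := by nlinarith
    have hthr1 : δ ≤ β * s / 4 := by
      have h5 := mul_le_mul_of_nonneg_left key1 hβ.le
      have h6 : β * (δ * (4 * lam)) = 4 * δ := by
        linear_combination (4 * δ) * hβval
      linarith
    have hthr2 : δ ≤ α * (β * s) / 2 := by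
      have h5 := mul_le_mul_of_nonneg_left key2 (mul_nonneg hα.le hβ.le)
      have h6 : α * β * (δ * (4 * lam ^ 3)) = 2 * δ := by
        have : α * β * (4 * lam ^ 3) = 2 := by field_simp; ring
        linear_combination δ * this
      have h8 : α * (β * s) = α * β * s := by ring
      linarith
    by_cases hc : t ≤ (1 + α) * s
    · have hb := step_bound hlam heps hγ hs0 hst hc
      linarith
    · push_neg at hc
      set u := (1 + α) * s with hu
      have hsu : s ≤ u := by nlinarith
      have hs0u : 4 * lam ^ 3 * δ + 1 ≤ u := le_trans hs hsu
      have hut : u ≤ t := hc.le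
      have htub' : t ≤ u * (1 + α) ^ (n + 1) := by
        rw [hu]
        calc t ≤ s * (1 + α) ^ (n + 1 + 1) := htub
          _ = (1 + α) * s * (1 + α) ^ (n + 1) := by ring
      have h1 := step_bound hlam heps hγ hs0 hsu (le_of_eq rfl)
      have h2 := ih u hs0u t hut htub'
      have h3 := gp_ineq (γ 0) (γ s) (γ t) (γ u)
      have hueq : β * u = β * s + α * (β * s) := by rw [hu]; ring
      rcases le_total (gp (γ 0) (γ s) (γ u)) (gp (γ 0) (γ u) (γ t)) with hmin | hmin
      · rw [min_eq_left hmin] at h3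
        linarith
      · rw [min_eq_right hmin] at h3
        linarith

lemma gp_lower {s t : ℝ} (hs : 4 * lam ^ 3 * δ + 1 ≤ s) (hst : s ≤ t) :
    β * s / 2 - 3 / 2 * eps ≤ gp (γ 0) (γ s) (γ t) := by
  have hl0 : 0 < lam := lt_of_lt_of_le one_pos hlam
  have hα : 0 < (α:ℝ) := by positivity
  have hδ : 0 < (δ:ℝ) := delta_pos
  have h9 : (0:ℝ) < 4 * lam ^ 3 * δ := mul_pos (by positivity) hδ
  have hs0 : (0:ℝ) < s := by linarith
  obtain ⟨n, hn⟩ := pow_unbounded_of_one_lt (t / s) (by linarith : (1:ℝ) < 1 + α)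
  refine chain_bound hlam heps hγ n s hs t hst ?_
  have h2 : t < s * (1 + α) ^ n := by
    rw [div_lt_iff₀ hs0] at hn
    linarith [hn, mul_comm ((1 + α) ^ n) s]
  have h3 : s * (1 + α) ^ n ≤ s * (1 + α) ^ (n + 1) := by
    apply mul_le_mul_of_nonneg_left _ hs0.le
    apply pow_le_pow_right₀ (by linarith) (by omega)
  linarith
end QG

/-- squat constant -/
noncomputable def KK (o : ℍ) : ℝ := 3 + o.im ^ 2 + 2 * ‖(o:ℂ)‖ ^ 2

lemma KK_pos (o : ℍ) : 0 < KK o := by unfold KK; positivity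

lemma norm_bound (o x : ℍ) :
    2 * o.im * x.im + dist (o:ℂ) x ^ 2 ≤ KK o * (1 + ‖(x:ℂ)‖ ^ 2) := by
  have h1 : 2 * o.im * x.im ≤ o.im ^ 2 + x.im ^ 2 := by nlinarith [sq_nonneg (o.im - x.im)]
  have h2 : x.im ≤ ‖(x:ℂ)‖ := by
    have := Complex.abs_im_le_norm (x:ℂ)
    have hx := x.im_pos
    rw [← UpperHalfPlane.coe_im] at hx ⊢
    rwa [abs_of_pos hx] at this
  have h2' : x.im ^ 2 ≤ ‖(x:ℂ)‖ ^ 2 := by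
    have hx := x.im_pos
    nlinarith
  have h3 : dist (o:ℂ) x ≤ ‖(o:ℂ)‖ + ‖(x:ℂ)‖ := by
    have := dist_le_norm_add_norm (o:ℂ) (x:ℂ)
    exact this
  have h4 : dist (o:ℂ) x ^ 2 ≤ 2 * ‖(o:ℂ)‖ ^ 2 + 2 * ‖(x:ℂ)‖ ^ 2 := by
    have hd : (0:ℝ) ≤ dist (o:ℂ) x := dist_nonneg
    nlinarith [sq_nonneg (‖(o:ℂ)‖ - ‖(x:ℂ)‖)]
  have h5 : (0:ℝ) ≤ ‖(x:ℂ)‖ ^ 2 := sq_nonneg _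
  have h6 : (0:ℝ) ≤ ‖(o:ℂ)‖ ^ 2 := sq_nonneg _
  unfold KK
  nlinarith [sq_nonneg o.im]

lemma chordal_est (o x y : ℍ) :
    dist (x:ℂ) y ^ 2 * o.im ^ 2 ≤ 2 * Real.exp (-(2 * gp o x y)) *
      ((KK o * (1 + ‖(x:ℂ)‖ ^ 2)) * (KK o * (1 + ‖(y:ℂ)‖ ^ 2))) := by
  have himo := o.im_pos
  have himx := x.im_pos
  have himy := y.im_pos
  have hQox := QQ_pos o x
  have hQoy := QQ_pos o y
  have e1 : Real.exp (dist x y) * ((Real.exp (dist o x))⁻¹ * (Real.exp (dist o y))⁻¹)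
      = Real.exp (-(2 * gp o x y)) := by
    rw [← Real.exp_neg, ← Real.exp_neg, ← Real.exp_add, ← Real.exp_add]
    congr 1; unfold gp; ring
  have e2 : QQ x y / 2 ≤ Real.exp (dist x y) := by linarith [QQ_le_two_exp x y]
  have e3 : (QQ o x)⁻¹ ≤ (Real.exp (dist o x))⁻¹ :=
    inv_anti₀ (Real.exp_pos _) (exp_le_QQ o x)
  have e4 : (QQ o y)⁻¹ ≤ (Real.exp (dist o y))⁻¹ :=
    inv_anti₀ (Real.exp_pos _) (exp_le_QQ o y)
  have h1 : QQ x y / 2 * ((QQ o x)⁻¹ * (QQ o y)⁻¹) ≤ Real.exp (-(2 * gp o x y)) := by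
    rw [← e1]
    apply mul_le_mul e2 (mul_le_mul e3 e4 (inv_nonneg.2 hQoy.le) (inv_nonneg.2 (Real.exp_pos _).le))
      (mul_nonneg (inv_nonneg.2 hQox.le) (inv_nonneg.2 hQoy.le)) (Real.exp_pos _).le
  have h2 : QQ x y ≤ 2 * Real.exp (-(2 * gp o x y)) * (QQ o x * QQ o y) := by
    have hpos2 : (0:ℝ) ≤ 2 * (QQ o x * QQ o y) := by
      have := mul_pos hQox hQoy; linarith
    have m2 := mul_le_mul_of_nonneg_right h1 hpos2
    have hL : QQ x y / 2 * ((QQ o x)⁻¹ * (QQ o y)⁻¹) * (2 * (QQ o x * QQ o y)) = QQ x y := by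
      field_simp
    have hR : Real.exp (-(2 * gp o x y)) * (2 * (QQ o x * QQ o y))
        = 2 * Real.exp (-(2 * gp o x y)) * (QQ o x * QQ o y) := by ring
    rw [hL, hR] at m2
    exact m2
  have hp : (0:ℝ) ≤ x.im * y.im := by positivity
  have d2 : dist (x:ℂ) y ^ 2 = (QQ x y - 2) * (x.im * y.im) := by
    rw [QQ_eq]
    field_simp
    ring
  have m1 : dist (x:ℂ) y ^ 2 ≤ QQ x y * (x.im * y.im) := by
    rw [d2]; nlinarith [two_le_QQ x y]
  have m2 : QQ x y * (x.im * y.im)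
      ≤ 2 * Real.exp (-(2 * gp o x y)) * (QQ o x * QQ o y) * (x.im * y.im) :=
    mul_le_mul_of_nonneg_right h2 hp
  have m3 : dist (x:ℂ) y ^ 2 * o.im ^ 2
      ≤ 2 * Real.exp (-(2 * gp o x y)) * (QQ o x * QQ o y) * (x.im * y.im) * o.im ^ 2 :=
    mul_le_mul_of_nonneg_right (m1.trans m2) (sq_nonneg o.im)
  have Nx : QQ o x * (o.im * x.im) = 2 * o.im * x.im + dist (o:ℂ) x ^ 2 := by
    rw [QQ_eq]; field_simp
  have Ny : QQ o y * (o.im * y.im) = 2 * o.im * y.im + dist (o:ℂ) y ^ 2 := by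
    rw [QQ_eq]; field_simp
  have m4 : 2 * Real.exp (-(2 * gp o x y)) * (QQ o x * QQ o y) * (x.im * y.im) * o.im ^ 2
      = 2 * Real.exp (-(2 * gp o x y))
        * ((QQ o x * (o.im * x.im)) * (QQ o y * (o.im * y.im))) := by ring
  rw [m4, Nx, Ny] at m3
  have hNx0 : (0:ℝ) ≤ 2 * o.im * x.im + dist (o:ℂ) x ^ 2 := by
    have : (0:ℝ) ≤ 2 * o.im * x.im := by positivity
    nlinarith [sq_nonneg (dist (o:ℂ) x)]
  have hNy0 : (0:ℝ) ≤ 2 * o.im * y.im + dist (o:ℂ) y ^ 2 := by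
    have : (0:ℝ) ≤ 2 * o.im * y.im := by positivity
    nlinarith [sq_nonneg (dist (o:ℂ) y)]
  have hK1 : (0:ℝ) ≤ KK o * (1 + ‖(x:ℂ)‖ ^ 2) := by
    have := KK_pos o; nlinarith [sq_nonneg (‖(x:ℂ)‖)]
  have m5 : (2 * o.im * x.im + dist (o:ℂ) x ^ 2) * (2 * o.im * y.im + dist (o:ℂ) y ^ 2)
      ≤ (KK o * (1 + ‖(x:ℂ)‖ ^ 2)) * (KK o * (1 + ‖(y:ℂ)‖ ^ 2)) :=
    mul_le_mul (norm_bound o x) (norm_bound o y) hNy0 hK1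
  have m6 := mul_le_mul_of_nonneg_left m5
    (by positivity : (0:ℝ) ≤ 2 * Real.exp (-(2 * gp o x y)))
  linarith

lemma le_of_sq_le_sq' {a b : ℝ} (h : a ^ 2 ≤ b ^ 2) (hb : 0 ≤ b) : a ≤ b := by
  nlinarith [h, hb]

section QG
variable {lam eps : ℝ} {γ : ℝ → ℍ}
variable (hlam : 1 ≤ lam) (heps : 0 < eps) (hγ : IsQuasiGeodesicOn lam eps γ (Ici (0:ℝ)))

local notation "δ" => Real.log 112 / 2
local notation "β" => lam⁻¹

include hlam heps hγ

lemma escape (R : ℝ) : ∀ᶠ t in atTop, R < dist (γ 0) (γ t) := by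
  have hl0 : 0 < lam := lt_of_lt_of_le one_pos hlam
  rw [eventually_atTop]
  refine ⟨lam * (|R| + eps + 1), fun t ht => ?_⟩
  have hT0 : 0 < lam * (|R| + eps + 1) := by positivity
  have ht0 : (0:ℝ) ≤ t := by linarith
  have h := (hγ 0 (mem_Ici.mpr le_rfl) t (mem_Ici.mpr ht0)).1
  rw [show |(0:ℝ) - t| = t by rw [zero_sub, abs_neg, abs_of_nonneg ht0]] at h
  have h2 : β * (lam * (|R| + eps + 1)) = |R| + eps + 1 := by field_simp
  have h3 : β * (lam * (|R| + eps + 1)) ≤ β * t :=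
    mul_le_mul_of_nonneg_left ht (inv_pos.2 hl0).le
  have h4 : R ≤ |R| := le_abs_self R
  linarith

lemma main_cauchy {η : ℝ} (hη : 0 < η) : ∃ T, (4 * lam ^ 3 * δ + 1) ≤ T ∧
    ∀ s t, T ≤ s → T ≤ t → dist ((γ s : ℂ)) ((γ t : ℂ)) ^ 2
      ≤ η * ((1 + ‖(γ s : ℂ)‖ ^ 2) * (1 + ‖(γ t : ℂ)‖ ^ 2)) := by
  have hl0 : 0 < lam := lt_of_lt_of_le one_pos hlam
  have hβ : 0 < (β:ℝ) := inv_pos.2 hl0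
  set o := γ 0 with ho
  have himo := o.im_pos
  have hK := KK_pos o
  set η' := η * o.im ^ 2 / (2 * KK o ^ 2) with hη'def
  have hη' : 0 < η' := by positivity
  set T := max (4 * lam ^ 3 * δ + 1) ((3 * eps - Real.log η') / β) with hT
  refine ⟨T, le_max_left _ _, ?_⟩
  have aux : ∀ s t, T ≤ s → s ≤ t → dist ((γ s : ℂ)) ((γ t : ℂ)) ^ 2
      ≤ η * ((1 + ‖(γ s : ℂ)‖ ^ 2) * (1 + ‖(γ t : ℂ)‖ ^ 2)) := by
    intro s t hTs hst
    have hs : 4 * lam ^ 3 * δ + 1 ≤ s := le_trans (le_max_left _ _) hTs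
    have hgp := gp_lower hlam heps hγ hs hst
    have hβT : 3 * eps - Real.log η' ≤ β * s := by
      have h1 : (3 * eps - Real.log η') / β ≤ s := le_trans (le_max_right _ _) hTs
      have := (div_le_iff₀ hβ).1 h1
      linarith [this, mul_comm s (β:ℝ)]
    have hE : Real.exp (-(2 * gp o (γ s) (γ t))) ≤ η' := by
      have h1 : -(2 * gp o (γ s) (γ t)) ≤ Real.log η' := by linarith
      calc Real.exp (-(2 * gp o (γ s) (γ t))) ≤ Real.exp (Real.log η') := Real.exp_le_exp.2 h1
        _ = η' := Real.exp_log hη'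
    have cd := chordal_est o (γ s) (γ t)
    set a := ‖(γ s : ℂ)‖ with ha
    set b := ‖(γ t : ℂ)‖ with hb
    have ha0 : 0 ≤ a := by positivity
    have hb0 : 0 ≤ b := by positivity
    have hA0 : (0:ℝ) ≤ (KK o * (1 + a ^ 2)) * (KK o * (1 + b ^ 2)) := by positivity
    have c3 : 2 * Real.exp (-(2 * gp o (γ s) (γ t)))
          * ((KK o * (1 + a ^ 2)) * (KK o * (1 + b ^ 2)))
        ≤ 2 * η' * ((KK o * (1 + a ^ 2)) * (KK o * (1 + b ^ 2))) := by
      have := mul_le_mul_of_nonneg_right hE hA0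
      nlinarith [this]
    have c4 : 2 * η' * ((KK o * (1 + a ^ 2)) * (KK o * (1 + b ^ 2)))
        = η * ((1 + a ^ 2) * (1 + b ^ 2)) * o.im ^ 2 := by
      rw [hη'def]
      field_simp
    have c5 : dist ((γ s : ℂ)) ((γ t : ℂ)) ^ 2 * o.im ^ 2
        ≤ η * ((1 + a ^ 2) * (1 + b ^ 2)) * o.im ^ 2 := by
      calc dist ((γ s : ℂ)) ((γ t : ℂ)) ^ 2 * o.im ^ 2
          ≤ 2 * Real.exp (-(2 * gp o (γ s) (γ t)))
            * ((KK o * (1 + a ^ 2)) * (KK o * (1 + b ^ 2))) := cd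
        _ ≤ 2 * η' * ((KK o * (1 + a ^ 2)) * (KK o * (1 + b ^ 2))) := c3
        _ = η * ((1 + a ^ 2) * (1 + b ^ 2)) * o.im ^ 2 := c4
    exact le_of_mul_le_mul_right c5 (by positivity)
  intro s t hTs hTt
  rcases le_total s t with h | h
  · exact aux s t hTs h
  · have := aux t s hTt h
    rw [dist_comm ((γ t : ℂ)) ((γ s : ℂ)),
      mul_comm (1 + ‖(γ t : ℂ)‖ ^ 2) (1 + ‖(γ s : ℂ)‖ ^ 2)] at this
    exact this
end QG

end Aux

open Real Topology in
/-- **Quasi-geodesic rays in the hyperbolic plane converge to a point on the circle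
at infinity.** For every `λ ≥ 1`, `ε > 0` and every `(λ, ε)`-quasi-geodesic ray
`γ : [0, ∞) → ℍ`, viewing `ℍ ⊆ ℂ ∪ {∞}` (the one-point compactification of `ℂ`),
the limit `lim_{t → ∞} γ t` exists in `ℂ ∪ {∞}` and lies in `ℝ ∪ {∞}`. -/
theorem quasigeodesic_ray_limit_exists :
    ∀ lam : ℝ, 1 ≤ lam → ∀ eps : ℝ, 0 < eps →
      ∀ γ : ℝ → ℍ, IsQuasiGeodesicOn lam eps γ (Ici (0:ℝ)) →
        ∃ p : OnePoint ℂ,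
          (p = OnePoint.infty ∨ ∃ r : ℝ, p = ((r : ℂ) : OnePoint ℂ)) ∧
          Tendsto (fun t : ℝ => (((γ t : ℂ)) : OnePoint ℂ)) atTop (nhds p) := by
  intro lam hlam eps heps γ hγ
  obtain ⟨p, hp⟩ : ∃ p, MapClusterPt p atTop (fun t : ℝ => (((γ t : ℂ)) : OnePoint ℂ)) :=
    exists_clusterPt_of_compactSpace _
  have hfreq : ∀ U ∈ 𝓝 p, ∃ᶠ t in atTop, (((γ t : ℂ)) : OnePoint ℂ) ∈ U :=
    mapClusterPt_iff_frequently.1 hp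
  cases p with
  | infty =>
    -- limit is ∞
    refine ⟨OnePoint.infty, Or.inl rfl, ?_⟩
    have hbig : ∀ R : ℝ, ∀ᶠ t in atTop, R < ‖(γ t : ℂ)‖ := by
      intro R
      set R₀ := |R| with hR₀
      have hR₀0 : 0 ≤ R₀ := abs_nonneg R
      obtain ⟨T, hT1, hTc⟩ := main_cauchy hlam heps hγ
        (η := (1 / (2 * (R₀ + 1))) ^ 2) (by positivity)
      have hU : ((fun (x:ℂ) => (x : OnePoint ℂ)) '' (Metric.closedBall (0:ℂ) (2*R₀+2))ᶜ
          ∪ {OnePoint.infty}) ∈ 𝓝 (OnePoint.infty : OnePoint ℂ) :=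
        (OnePoint.hasBasis_nhds_infty).mem_of_mem
          ⟨Metric.isClosed_closedBall, isCompact_closedBall _ _⟩
      obtain ⟨s', hmem, hs'T⟩ :=
        ((hfreq _ hU).and_eventually (eventually_ge_atTop T)).exists
      have hs'big : 2*R₀+2 < ‖(γ s' : ℂ)‖ := by
        rcases hmem with hin | hinf
        · obtain ⟨w, hw1, hw2⟩ := hin
          have hww : w = ((γ s' : ℂ)) := OnePoint.coe_injective hw2
          rw [hww] at hw1
          simp only [mem_compl_iff, Metric.mem_closedBall, not_le] at hw1
          rwa [dist_zero_right] at hw1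
        · exact absurd (mem_singleton_iff.1 hinf) (OnePoint.coe_ne_infty _)
      rw [eventually_atTop]
      refine ⟨T, fun t ht => ?_⟩
      by_contra hle
      push_neg at hle
      have hbR : ‖(γ t : ℂ)‖ ≤ R₀ := le_trans hle (le_abs_self R)
      set a := ‖(γ s' : ℂ)‖
      set b := ‖(γ t : ℂ)‖
      have ha0 : 0 ≤ a := by positivity
      have hb0 : 0 ≤ b := by positivity
      have hd := hTc s' t hs'T ht
      have e1 : 1 + a ^ 2 ≤ (1 + a) ^ 2 := by nlinarith
      have e2 : 1 + b ^ 2 ≤ (1 + b) ^ 2 := by nlinarith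
      have h6 : dist ((γ s' : ℂ)) ((γ t : ℂ)) ^ 2
          ≤ (1 / (2 * (R₀ + 1)) * ((1 + a) * (1 + b))) ^ 2 := by
        have eprod : (1 + a ^ 2) * (1 + b ^ 2) ≤ ((1 + a) * (1 + b)) ^ 2 := by
          calc (1 + a ^ 2) * (1 + b ^ 2) ≤ (1 + a) ^ 2 * (1 + b) ^ 2 :=
                mul_le_mul e1 e2 (by positivity) (by positivity)
            _ = ((1 + a) * (1 + b)) ^ 2 := by ring
        calc dist ((γ s' : ℂ)) ((γ t : ℂ)) ^ 2
            ≤ (1 / (2 * (R₀ + 1))) ^ 2 * ((1 + a ^ 2) * (1 + b ^ 2)) := hd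
          _ ≤ (1 / (2 * (R₀ + 1))) ^ 2 * ((1 + a) * (1 + b)) ^ 2 := by
              apply mul_le_mul_of_nonneg_left eprod (by positivity)
          _ = (1 / (2 * (R₀ + 1)) * ((1 + a) * (1 + b))) ^ 2 := by ring
      have h7 : dist ((γ s' : ℂ)) ((γ t : ℂ)) ≤ 1 / (2 * (R₀ + 1)) * ((1 + a) * (1 + b)) :=
        le_of_sq_le_sq' h6 (by positivity)
      have h8 : 1 / (2 * (R₀ + 1)) * ((1 + a) * (1 + b)) ≤ (1 + a) / 2 := by
        have hb1 : 1 + b ≤ R₀ + 1 := by linarith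
        have key : 1 / (2 * (R₀ + 1)) * ((1 + a) * (R₀ + 1)) = (1 + a) / 2 := by
          field_simp
        calc 1 / (2 * (R₀ + 1)) * ((1 + a) * (1 + b))
            ≤ 1 / (2 * (R₀ + 1)) * ((1 + a) * (R₀ + 1)) := by
              apply mul_le_mul_of_nonneg_left _ (by positivity)
              exact mul_le_mul_of_nonneg_left hb1 (by positivity)
          _ = (1 + a) / 2 := key
      have hdl : a - b ≤ dist ((γ s' : ℂ)) ((γ t : ℂ)) := by
        have := norm_sub_norm_le ((γ s' : ℂ)) ((γ t : ℂ))
        rw [dist_eq_norm]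
        simpa using this
      linarith

    have htc : Tendsto (fun t : ℝ => ((γ t : ℂ))) atTop (coclosedCompact ℂ) := by
      rw [Filter.hasBasis_coclosedCompact.tendsto_right_iff]
      rintro s ⟨hscl, hscp⟩
      obtain ⟨r, hr⟩ := hscp.isBounded.subset_closedBall (0:ℂ)
      filter_upwards [hbig r] with t ht
      intro hmem
      have := hr hmem
      rw [Metric.mem_closedBall, dist_zero_right] at this
      linarith
    exact (OnePoint.tendsto_coe_infty).comp htc
  | coe z₀ =>
    rcases lt_trichotomy z₀.im 0 with him | him | him
    · -- impossible : im < 0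
      exfalso
      have hU : ((fun (x:ℂ) => (x : OnePoint ℂ)) '' (Metric.ball z₀ (-z₀.im / 2)))
          ∈ 𝓝 ((z₀ : ℂ) : OnePoint ℂ) := by
        rw [OnePoint.nhds_coe_eq]
        exact image_mem_map (Metric.ball_mem_nhds z₀ (by linarith))
      obtain ⟨t, hin⟩ := (hfreq _ hU).exists
      obtain ⟨w, hw1, hw2⟩ := hin
      have hww : w = ((γ t : ℂ)) := OnePoint.coe_injective hw2
      rw [hww, Metric.mem_ball, Complex.dist_eq] at hw1
      have h1 : |((γ t : ℂ) - z₀).im| ≤ ‖(γ t : ℂ) - z₀‖ :=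
        Complex.abs_im_le_norm _
      have h2 : ((γ t : ℂ) - z₀).im = (γ t).im - z₀.im := by
        rw [Complex.sub_im]; rfl
      have h3 : 0 < (γ t).im := (γ t).im_pos
      have h4 : (γ t).im - z₀.im ≤ |((γ t : ℂ) - z₀).im| := le_abs_self _
      linarith
    · -- im = 0 : the limit is the real point z₀
      refine ⟨((z₀ : ℂ) : OnePoint ℂ), Or.inr ⟨z₀.re, ?_⟩, ?_⟩
      · have hz : z₀ = ((z₀.re : ℝ) : ℂ) := by
          apply Complex.ext <;> simp [him]
        exact congrArg _ hz
      · have hten : Tendsto (fun t : ℝ => ((γ t : ℂ))) atTop (𝓝 z₀) := by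
          rw [Metric.tendsto_atTop]
          intro ε hε
          set m := ‖z₀‖ + 1 with hm
          have hm1 : 1 ≤ m := by
            have : 0 ≤ ‖z₀‖ := norm_nonneg _
            rw [hm]; linarith
          set w := min (1/(2*(1+m))) (ε/(2*(1+m)*(2*m+2))) with hw
          have hw0 : 0 < w := by
            apply lt_min (by positivity) (by positivity)
          obtain ⟨T, hT1, hTc⟩ := main_cauchy hlam heps hγ (η := w ^ 2) (by positivity)
          have hU : ((fun (x:ℂ) => (x : OnePoint ℂ)) '' (Metric.ball z₀ (min 1 (ε/2))))
              ∈ 𝓝 ((z₀ : ℂ) : OnePoint ℂ) := by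
            rw [OnePoint.nhds_coe_eq]
            exact image_mem_map (Metric.ball_mem_nhds z₀ (by positivity))
          obtain ⟨s', hmem, hs'T⟩ :=
            ((hfreq _ hU).and_eventually (eventually_ge_atTop T)).exists
          obtain ⟨v, hv1, hv2⟩ := hmem
          have hvv : v = ((γ s' : ℂ)) := OnePoint.coe_injective hv2
          rw [hvv, Metric.mem_ball] at hv1
          refine ⟨T, fun t ht => ?_⟩
          set a := ‖(γ s' : ℂ)‖ with ha
          set b := ‖(γ t : ℂ)‖ with hb
          have ha0 : 0 ≤ a := by positivity
          have hb0 : 0 ≤ b := by positivity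
          have ham : a ≤ m := by
            have h1 : a - ‖z₀‖ ≤ ‖(γ s' : ℂ) - z₀‖ := by
              have := norm_sub_norm_le ((γ s' : ℂ)) z₀
              simpa using this
            have h2 : ‖(γ s' : ℂ) - z₀‖ < 1 := by
              rw [← Complex.dist_eq]
              exact lt_of_lt_of_le hv1 (min_le_left _ _)
            rw [hm]; linarith
          have hd := hTc s' t hs'T ht
          have h6 : dist ((γ s' : ℂ)) ((γ t : ℂ)) ^ 2 ≤ (w * ((1 + a) * (1 + b))) ^ 2 := by
            have e1 : 1 + a ^ 2 ≤ (1 + a) ^ 2 := by nlinarith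
            have e2 : 1 + b ^ 2 ≤ (1 + b) ^ 2 := by nlinarith
            have eprod : (1 + a ^ 2) * (1 + b ^ 2) ≤ ((1 + a) * (1 + b)) ^ 2 := by
              calc (1 + a ^ 2) * (1 + b ^ 2) ≤ (1 + a) ^ 2 * (1 + b) ^ 2 :=
                    mul_le_mul e1 e2 (by positivity) (by positivity)
                _ = ((1 + a) * (1 + b)) ^ 2 := by ring
            calc dist ((γ s' : ℂ)) ((γ t : ℂ)) ^ 2
                ≤ w ^ 2 * ((1 + a ^ 2) * (1 + b ^ 2)) := hd
              _ ≤ w ^ 2 * ((1 + a) * (1 + b)) ^ 2 := by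
                  apply mul_le_mul_of_nonneg_left eprod (by positivity)
              _ = (w * ((1 + a) * (1 + b))) ^ 2 := by ring
          have h7 : dist ((γ s' : ℂ)) ((γ t : ℂ)) ≤ w * ((1 + a) * (1 + b)) :=
            le_of_sq_le_sq' h6 (by positivity)
          have hwm : w * (1 + m) ≤ 1 / 2 := by
            have h1 : w ≤ 1/(2*(1+m)) := min_le_left _ _
            have h2 : 1/(2*(1+m)) * (1 + m) = 1/2 := by field_simp
            calc w * (1 + m) ≤ 1/(2*(1+m)) * (1 + m) :=
                  mul_le_mul_of_nonneg_right h1 (by positivity)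
              _ = 1/2 := h2
          have h8 : dist ((γ s' : ℂ)) ((γ t : ℂ)) ≤ (1 + b) / 2 := by
            have h9 : w * ((1 + a) * (1 + b)) ≤ w * ((1 + m) * (1 + b)) := by
              apply mul_le_mul_of_nonneg_left _ hw0.le
              apply mul_le_mul_of_nonneg_right (by linarith) (by positivity)
            have h10 : w * ((1 + m) * (1 + b)) = (w * (1 + m)) * (1 + b) := by ring
            have h11 : (w * (1 + m)) * (1 + b) ≤ (1/2) * (1 + b) :=
              mul_le_mul_of_nonneg_right hwm (by positivity)
            exact le_trans (le_trans h7 (le_trans h9 (le_of_eq h10)))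
              (le_trans h11 (le_of_eq (by ring)))
          have hbb : b ≤ 2 * m + 1 := by
            have h1 : b - a ≤ dist ((γ s' : ℂ)) ((γ t : ℂ)) := by
              have := norm_sub_norm_le ((γ t : ℂ)) ((γ s' : ℂ))
              rw [dist_comm, dist_eq_norm]
              simpa using this
            linarith
          have h12 : dist ((γ s' : ℂ)) ((γ t : ℂ)) ≤ ε / 2 := by
            have h9 : w * ((1 + a) * (1 + b)) ≤ w * ((1 + m) * (2 * m + 2)) := by
              apply mul_le_mul_of_nonneg_left _ hw0.le
              apply mul_le_mul (by linarith) (by linarith) (by positivity) (by linarith)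
            have h10 : w * ((1 + m) * (2 * m + 2)) ≤ ε / 2 := by
              have h1 : w ≤ ε/(2*(1+m)*(2*m+2)) := min_le_right _ _
              have h2 : ε/(2*(1+m)*(2*m+2)) * ((1 + m) * (2 * m + 2)) = ε/2 := by
                field_simp
              calc w * ((1 + m) * (2 * m + 2))
                  ≤ ε/(2*(1+m)*(2*m+2)) * ((1 + m) * (2 * m + 2)) :=
                    mul_le_mul_of_nonneg_right h1 (by positivity)
                _ = ε/2 := h2
            exact le_trans (le_trans h7 h9) h10
          have hfin : dist ((γ t : ℂ)) z₀ ≤ dist ((γ t : ℂ)) ((γ s' : ℂ)) + dist ((γ s' : ℂ)) z₀ :=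
            dist_triangle _ _ _
          have hv1' : dist ((γ s' : ℂ)) z₀ < ε / 2 :=
            lt_of_lt_of_le hv1 (min_le_right _ _)
          rw [dist_comm ((γ t : ℂ)) ((γ s' : ℂ))] at hfin
          linarith
        exact ((OnePoint.continuous_coe).tendsto z₀).comp hten
    · -- impossible : im > 0
      exfalso
      set w₀ : ℍ := ⟨z₀, him⟩ with hw₀
      have hU : ((fun (x:ℂ) => (x : OnePoint ℂ)) '' (Metric.ball z₀ (z₀.im / 2)))
          ∈ 𝓝 ((z₀ : ℂ) : OnePoint ℂ) := by
        rw [OnePoint.nhds_coe_eq]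
        exact image_mem_map (Metric.ball_mem_nhds z₀ (by linarith))
      obtain ⟨t, hin, hesc⟩ :=
        ((hfreq _ hU).and_eventually (escape hlam heps hγ (dist (γ 0) w₀ + 1))).exists
      obtain ⟨v, hv1, hv2⟩ := hin
      have hvv : v = ((γ t : ℂ)) := OnePoint.coe_injective hv2
      rw [hvv, Metric.mem_ball, Complex.dist_eq] at hv1
      -- im (γ t) ≥ z₀.im / 2
      have h1 : |((γ t : ℂ) - z₀).im| ≤ ‖(γ t : ℂ) - z₀‖ := Complex.abs_im_le_norm _
      have h2 : ((γ t : ℂ) - z₀).im = (γ t).im - z₀.im := by rw [Complex.sub_im]; rfl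
      have h3 : z₀.im / 2 ≤ (γ t).im := by
        have := abs_le.1 (le_trans h1 hv1.le) |>.1
        rw [h2] at this
        linarith [this]
      -- hyperbolic distance bound
      have h4 : dist (γ t) w₀ ≤ 1 := by
        have hb := UpperHalfPlane.dist_le_dist_coe_div_sqrt (γ t) w₀
        have hcoe : (w₀ : ℂ) = z₀ := rfl
        have him' : w₀.im = z₀.im := rfl
        have h5 : z₀.im / 2 ≤ Real.sqrt ((γ t).im * w₀.im) := by
          rw [him']
          have h6 : (z₀.im / 2) ^ 2 ≤ (γ t).im * z₀.im := by nlinarith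
          calc z₀.im / 2 = Real.sqrt ((z₀.im / 2) ^ 2) := (Real.sqrt_sq (by linarith)).symm
            _ ≤ Real.sqrt ((γ t).im * z₀.im) := Real.sqrt_le_sqrt h6
        have h7 : dist ((γ t : ℂ)) (w₀ : ℂ) ≤ z₀.im / 2 := by
          rw [hcoe, Complex.dist_eq]; exact hv1.le
        have h8 : dist ((γ t : ℂ)) (w₀ : ℂ) / Real.sqrt ((γ t).im * w₀.im) ≤ 1 := by
          rw [div_le_one (by positivity)]
          calc dist ((γ t : ℂ)) (w₀ : ℂ) ≤ z₀.im / 2 := h7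
            _ ≤ Real.sqrt ((γ t).im * w₀.im) := h5
        linarith [hb, h8]
      have h9 : dist (γ 0) (γ t) ≤ dist (γ 0) w₀ + dist w₀ (γ t) := dist_triangle _ _ _
      rw [dist_comm w₀ (γ t)] at h9
      linarith
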